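/- arXiv:1302.5922 — 2 statements merged into one kernel-verified Lean document; each statement's English description precedes it below -/
import Mathlib

section
/- Let G be a countable group acting by quasi-measure-preserving automorphisms on a probability space (Ω, ν), acting ergodically. Then the ratio set r(G) with 0 removed, r(G) \ {0}, is a multiplicative subgroup of (0, ∞). -/
open MeasureTheory

/-- Krieger's ratio set `r(G)` of a nonsingular group action on a measure space:
`λ ∈ r(G)` iff `λ ≥ 0` and for every `ε > 0` and every Borel `E` of positive measure
there are `g ∈ G` and Borel `F` of positive measure with `F ∪ gF ⊆ E` and
`|d(ν∘g)/dν − λ| < ε` on `F`.  Here `(ν∘g)(E) = ν(gE)` is the pushforward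
`ν.map (g⁻¹ • ·)`. -/
def ratioSet (G : Type*) [Group G] {Ω : Type*} [MeasurableSpace Ω] [MulAction G Ω]
    (ν : Measure Ω) : Set ℝ :=
  {l : ℝ | 0 ≤ l ∧ ∀ ε > (0 : ℝ), ∀ E : Set Ω, MeasurableSet E → 0 < ν E →
    ∃ (g : G) (F : Set Ω), MeasurableSet F ∧ 0 < ν F ∧
      F ∪ (fun ω : Ω => g • ω) '' F ⊆ E ∧
      ∀ ω ∈ F, |((ν.map (fun x : Ω => g⁻¹ • x)).rnDeriv ν ω).toReal - l| < ε}

open scoped ENNReal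
set_option linter.unusedSectionVars false
set_option linter.unusedVariables false

section Aux
variable {Ω : Type*} [MeasurableSpace Ω] (ν : Measure Ω) [IsProbabilityMeasure ν]
  {G : Type*} [Group G] [MulAction G Ω]

lemma mapAC (hmeas : ∀ g : G, Measurable (fun ω : Ω => g • ω))
    (hqi : ∀ g : G, ∀ A : Set Ω, MeasurableSet A →
      (ν A = 0 ↔ ν ((fun ω : Ω => g • ω) ⁻¹' A) = 0)) (g : G) :
    ν.map (fun x : Ω => g⁻¹ • x) ≪ ν := by
  refine Measure.AbsolutelyContinuous.mk fun s hs hs0 => ?_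
  rw [Measure.map_apply (hmeas g⁻¹) hs]
  exact (hqi g⁻¹ s hs).mp hs0

lemma map_withDensity (hmeas : ∀ g : G, Measurable (fun ω : Ω => g • ω))
    (g : G) {f : Ω → ℝ≥0∞} (hf : Measurable f) :
    (ν.withDensity f).map (fun x : Ω => g • x)
      = (ν.map (fun x : Ω => g • x)).withDensity (fun x => f (g⁻¹ • x)) := by
  ext A hA
  have hfc : Measurable fun x : Ω => f (g⁻¹ • x) := hf.comp (hmeas g⁻¹)
  rw [Measure.map_apply (hmeas g) hA, withDensity_apply _ ((hmeas g) hA),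
    withDensity_apply _ hA, setLIntegral_map hA hfc (hmeas g)]
  simp [inv_smul_smul]

lemma cocycle (hmeas : ∀ g : G, Measurable (fun ω : Ω => g • ω))
    (hqi : ∀ g : G, ∀ A : Set Ω, MeasurableSet A →
      (ν A = 0 ↔ ν ((fun ω : Ω => g • ω) ⁻¹' A) = 0)) (g h : G) :
    (ν.map (fun x : Ω => (h * g)⁻¹ • x)).rnDeriv ν =ᵐ[ν]
      fun ω => (ν.map (fun x : Ω => g⁻¹ • x)).rnDeriv ν ω *
        (ν.map (fun x : Ω => h⁻¹ • x)).rnDeriv ν (g • ω) := by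
  set Dg := (ν.map (fun x : Ω => g⁻¹ • x)).rnDeriv ν with hDgdef
  set Dh := (ν.map (fun x : Ω => h⁻¹ • x)).rnDeriv ν with hDhdef
  have hDg : Measurable Dg := Measure.measurable_rnDeriv _ _
  have hDh : Measurable Dh := Measure.measurable_rnDeriv _ _
  have hPh : IsProbabilityMeasure (ν.map (fun x : Ω => h⁻¹ • x)) :=
    Measure.isProbabilityMeasure_map (hmeas h⁻¹).aemeasurable
  have hPg : IsProbabilityMeasure (ν.map (fun x : Ω => g⁻¹ • x)) :=
    Measure.isProbabilityMeasure_map (hmeas g⁻¹).aemeasurable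
  have key : ν.map (fun x : Ω => (h * g)⁻¹ • x)
      = ν.withDensity (fun ω => Dg ω * Dh (g • ω)) := by
    have e1 : (fun x : Ω => (h * g)⁻¹ • x)
        = (fun x : Ω => g⁻¹ • x) ∘ (fun x : Ω => h⁻¹ • x) := by
      funext x; simp [mul_inv_rev, mul_smul]
    rw [e1, ← Measure.map_map (hmeas g⁻¹) (hmeas h⁻¹),
      ← Measure.withDensity_rnDeriv_eq _ _ (mapAC ν hmeas hqi h),
      ← hDhdef, map_withDensity ν hmeas g⁻¹ hDh]
    simp only [inv_inv]
    rw [← Measure.withDensity_rnDeriv_eq _ _ (mapAC ν hmeas hqi g), ← hDgdef,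
      ]
    have hcomp : Measurable fun x : Ω => Dh (g • x) := hDh.comp (hmeas g)
    rw [← withDensity_mul _ hDg hcomp]
    rfl
  rw [key]
  exact Measure.rnDeriv_withDensity ν (hDg.mul (hDh.comp (hmeas g)))

lemma shrink {F : Set Ω} (hF : MeasurableSet F) {p : Ω → Prop} (hp : ∀ᵐ ω ∂ν, p ω) :
    ∃ F₀ : Set Ω, MeasurableSet F₀ ∧ F₀ ⊆ F ∧ ν F₀ = ν F ∧ ∀ ω ∈ F₀, p ω := by
  refine ⟨F \ toMeasurable ν {ω | ¬ p ω}, hF.diff (measurableSet_toMeasurable _ _),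
    Set.diff_subset, ?_, ?_⟩
  · refine measure_diff_null ?_
    rw [measure_toMeasurable]
    exact hp
  · intro ω hω
    by_contra hc
    exact hω.2 (subset_toMeasurable _ _ hc)

lemma image_smul_eq (g : G) (F : Set Ω) :
    (fun ω : Ω => g • ω) '' F = (fun ω : Ω => g⁻¹ • ω) ⁻¹' F := by
  ext x
  constructor
  · rintro ⟨y, hy, rfl⟩; simpa [inv_smul_smul] using hy
  · intro hx; exact ⟨g⁻¹ • x, hx, by simp [smul_inv_smul]⟩

lemma image_pos (hmeas : ∀ g : G, Measurable (fun ω : Ω => g • ω))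
    (hqi : ∀ g : G, ∀ A : Set Ω, MeasurableSet A →
      (ν A = 0 ↔ ν ((fun ω : Ω => g • ω) ⁻¹' A) = 0))
    (g : G) {F : Set Ω} (hF : MeasurableSet F) (hpos : 0 < ν F) :
    0 < ν ((fun ω : Ω => g • ω) '' F) := by
  rw [image_smul_eq]
  rcases eq_or_ne (ν ((fun ω : Ω => g⁻¹ • ω) ⁻¹' F)) 0 with h | h
  · exact absurd ((hqi g⁻¹ F hF).mpr h) hpos.ne'
  · exact pos_iff_ne_zero.mpr h

end Aux

/-- For a countable group `G` acting nonsingularly and ergodically on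
a probability space `(Ω, ν)`, the ratio set with `0` removed, `r(G) \ {0}`, is a
multiplicative subgroup of `(0, ∞)`: it consists of positive reals, contains `1`, and
is closed under multiplication and inversion. -/
theorem ratioSet_sdiff_zero_subgroup
    {Ω : Type*} [MeasurableSpace Ω] (ν : Measure Ω) [IsProbabilityMeasure ν]
    (G : Type*) [Group G] [Countable G] [MulAction G Ω]
    (hmeas : ∀ g : G, Measurable (fun ω : Ω => g • ω))
    (hqi : ∀ g : G, ∀ A : Set Ω, MeasurableSet A →
      (ν A = 0 ↔ ν ((fun ω : Ω => g • ω) ⁻¹' A) = 0))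
    (herg : ∀ X : Set Ω, MeasurableSet X → (∀ g : G, (fun ω : Ω => g • ω) '' X = X) →
      ν X = 0 ∨ ν X = 1) :
    (∀ l ∈ ratioSet G ν \ {0}, 0 < l) ∧
    (1 : ℝ) ∈ ratioSet G ν \ {0} ∧
    (∀ l ∈ ratioSet G ν \ {0}, ∀ l' ∈ ratioSet G ν \ {0},
      l * l' ∈ ratioSet G ν \ {0}) ∧
    (∀ l ∈ ratioSet G ν \ {0}, l⁻¹ ∈ ratioSet G ν \ {0}) := by
  have Done : ∀ᵐ ω ∂ν, ((ν.map (fun x : Ω => (1 : G)⁻¹ • x)).rnDeriv ν) ω = 1 := by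
    have hid : ν.map (fun x : Ω => (1 : G)⁻¹ • x) = ν := by
      have : (fun x : Ω => (1 : G)⁻¹ • x) = id := by funext x; simp
      rw [this, Measure.map_id]
    rw [hid]
    exact Measure.rnDeriv_self ν
  refine ⟨?_, ?_, ?_, ?_⟩
  · rintro l ⟨⟨hl0, -⟩, hne⟩
    exact lt_of_le_of_ne hl0 (Ne.symm (by simpa using hne))
  · refine ⟨⟨zero_le_one, ?_⟩, by simp⟩
    intro ε hε E hE hEpos
    obtain ⟨F₀, hF₀m, hF₀sub, hF₀eq, hF₀p⟩ := shrink ν hE Done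
    refine ⟨1, F₀, hF₀m, by rwa [hF₀eq], ?_, ?_⟩
    · have himg : (fun ω : Ω => (1 : G) • ω) '' F₀ = F₀ := by
        simp [one_smul]
      rw [himg, Set.union_self]
      exact hF₀sub
    · intro ω hω
      rw [hF₀p ω hω]
      simpa using hε
  · rintro l ⟨⟨hl0, hl⟩, hlne⟩ l' ⟨⟨hl'0, hl'⟩, hl'ne⟩
    have hlne' : l ≠ 0 := by simpa using hlne
    have hl'ne' : l' ≠ 0 := by simpa using hl'ne
    refine ⟨⟨mul_nonneg hl0 hl'0, ?_⟩, by simp [hlne', hl'ne']⟩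
    intro ε hε E hE hEpos
    set δ := min 1 (ε / (l + l' + 2)) with hδdef
    have hδpos : 0 < δ := lt_min one_pos (div_pos hε (by positivity))
    obtain ⟨g', F', hF'm, hF'pos, hsub', hbd'⟩ := hl' δ hδpos E hE hEpos
    obtain ⟨g, F, hFm, hFpos, hsub, hbd⟩ := hl δ hδpos F' hF'm hF'pos
    obtain ⟨F₀, hF₀m, hF₀sub, hF₀eq, hF₀p⟩ := shrink ν hFm (cocycle ν hmeas hqi g g')
    refine ⟨g' * g, F₀, hF₀m, by rwa [hF₀eq], ?_, ?_⟩
    · intro x hx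
      rcases hx with hx | ⟨ω, hω, rfl⟩
      · exact hsub' (Or.inl (hsub (Or.inl (hF₀sub hx))))
      · have h1 : g • ω ∈ F' := hsub (Or.inr ⟨ω, hF₀sub hω, rfl⟩)
        have h2 : (g' * g) • ω = g' • (g • ω) := mul_smul g' g ω
        show (g' * g) • ω ∈ E
        rw [h2]
        exact hsub' (Or.inr ⟨g • ω, h1, rfl⟩)
    · intro ω hω
      have hcoc := hF₀p ω hω
      have hb := hbd ω (hF₀sub hω)
      have ha := hbd' (g • ω) (hsub (Or.inr ⟨ω, hF₀sub hω, rfl⟩))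
      rw [hcoc, ENNReal.toReal_mul]
      set a := ((ν.map (fun x : Ω => g'⁻¹ • x)).rnDeriv ν (g • ω)).toReal with hadef
      set b := ((ν.map (fun x : Ω => g⁻¹ • x)).rnDeriv ν ω).toReal with hbdef
      have ha0 : 0 ≤ a := ENNReal.toReal_nonneg
      have hδ1 : δ ≤ 1 := min_le_left _ _
      have hδ2 : δ * (l + l' + 2) ≤ ε := by
        have h := min_le_right 1 (ε / (l + l' + 2))
        rw [← hδdef] at h
        have hpos : (0 : ℝ) < l + l' + 2 := by positivity
        calc δ * (l + l' + 2) ≤ ε / (l + l' + 2) * (l + l' + 2) := by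
              exact mul_le_mul_of_nonneg_right h hpos.le
          _ = ε := by field_simp
      have haup : a ≤ l' + 1 := by
        have := (abs_lt.mp ha).2
        linarith
      have habs : |b * a - l * l'| ≤ |b - l| * a + l * |a - l'| := by
        calc |b * a - l * l'| = |(b - l) * a + l * (a - l')| := by ring_nf
          _ ≤ |(b - l) * a| + |l * (a - l')| := abs_add_le _ _
          _ = |b - l| * a + l * |a - l'| := by
              rw [abs_mul, abs_mul, abs_of_nonneg ha0, abs_of_nonneg hl0]
      nlinarith [habs, hb, ha, haup, ha0, hl0, hδpos, hδ2,
        mul_nonneg (sub_nonneg.mpr hb.le) ha0,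
        mul_nonneg hl0 (sub_nonneg.mpr ha.le),
        mul_nonneg hδpos.le (sub_nonneg.mpr haup),
        abs_nonneg (b - l), abs_nonneg (a - l')]
  · rintro l ⟨⟨hl0, hl⟩, hlne⟩
    have hlne' : l ≠ 0 := by simpa using hlne
    have hlpos : 0 < l := lt_of_le_of_ne hl0 (Ne.symm hlne')
    refine ⟨⟨inv_nonneg.mpr hl0, ?_⟩, by simpa using inv_ne_zero hlne'⟩
    intro ε hε E hE hEpos
    set δ := min (l / 2) (ε * l ^ 2 / 2) with hδdef
    have hδpos : 0 < δ :=
      lt_min (by positivity) (div_pos (mul_pos hε (pow_pos hlpos 2)) two_pos)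
    obtain ⟨g, F, hFm, hFpos, hsub, hbd⟩ := hl δ hδpos E hE hEpos
    have hae : ∀ᵐ ω ∂ν, (ν.map (fun x : Ω => g⁻¹ • x)).rnDeriv ν ω *
        (ν.map (fun x : Ω => (g⁻¹)⁻¹ • x)).rnDeriv ν (g • ω) = 1 := by
      have h1 := cocycle ν hmeas hqi g g⁻¹
      have h2 : ν.map (fun x : Ω => (g⁻¹ * g)⁻¹ • x) = ν := by
        have : (fun x : Ω => (g⁻¹ * g)⁻¹ • x) = id := by funext x; simp
        rw [this, Measure.map_id]
      rw [h2] at h1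
      filter_upwards [h1, Measure.rnDeriv_self ν] with ω hω h1ω
      rw [← hω, h1ω]
    obtain ⟨F₀, hF₀m, hF₀sub, hF₀eq, hF₀p⟩ := shrink ν hFm hae
    refine ⟨g⁻¹, (fun ω : Ω => g • ω) '' F₀, ?_, ?_, ?_, ?_⟩
    · rw [image_smul_eq]
      exact (hmeas g⁻¹) hF₀m
    · exact image_pos ν hmeas hqi g hF₀m (by rwa [hF₀eq])
    · intro x hx
      rcases hx with ⟨ω, hω, rfl⟩ | ⟨y, ⟨ω, hω, rfl⟩, rfl⟩
      · exact hsub (Or.inr ⟨ω, hF₀sub hω, rfl⟩)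
      · show g⁻¹ • g • ω ∈ E
        rw [inv_smul_smul]
        exact hsub (Or.inl (hF₀sub hω))
    · rintro x ⟨ω, hω, rfl⟩
      have hkey := hF₀p ω hω
      have hb := hbd ω (hF₀sub hω)
      set c := ((ν.map (fun x : Ω => (g⁻¹)⁻¹ • x)).rnDeriv ν (g • ω)).toReal with hcdef
      set b := ((ν.map (fun x : Ω => g⁻¹ • x)).rnDeriv ν ω).toReal with hbdef
      have hbc : b * c = 1 := by
        have h := congrArg ENNReal.toReal hkey
        rwa [ENNReal.toReal_mul, ENNReal.toReal_one] at h
      have hδl : δ ≤ l / 2 := min_le_left _ _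
      have hδε : δ ≤ ε * l ^ 2 / 2 := min_le_right _ _
      have hbl := abs_lt.mp hb
      have hbhalf : l / 2 < b := by linarith
      have hbpos : 0 < b := by linarith
      have hc : c = b⁻¹ := by
        field_simp
        linear_combination hbc
      show |c - l⁻¹| < ε
      rw [hc]
      have heq : b⁻¹ - l⁻¹ = (l - b) / (b * l) := by
        field_simp
      rw [heq, abs_div, abs_of_pos (mul_pos hbpos hlpos), div_lt_iff₀ (mul_pos hbpos hlpos)]
      have habs : |l - b| < δ := by rwa [abs_sub_comm]
      nlinarith [habs, hbhalf, hδε, hε, hlpos, hδl]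
end

section
/- For any two elements x, y ∈ Γ of the same length m ≥ 1, there exists a measure-preserving Borel automorphism k of (Ω, ν) such that k maps Ω^x bijectively onto Ω^y (up to a null set), k is the identity on Ω \ (Ω^x ∪ Ω^y), and for ν-a.e. ω ∈ Ω, kω ∈ Γω (i.e., k lies in the measure-preserving full group [Γ]₀). -/
open MeasureTheory
open scoped ENNReal

/-- A directed letter: generators of `ℤ₂ * ⋯ * ℤ₂ * ℤ * ⋯ * ℤ` (s copies of ℤ₂,
t copies of ℤ) together with the inverses of the infinite-order generators. -/
abbrev Letter (s t : ℕ) := Sum (Fin s) (Fin t × Bool)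

/-- Formal inverse of a letter. -/
def Letter.inv {s t : ℕ} : Letter s t → Letter s t
  | .inl i => .inl i
  | .inr (j, b) => .inr (j, !b)

/-- A list of letters is a reduced word if no letter is followed by its inverse. -/
def RedWord {s t : ℕ} (w : List (Letter s t)) : Prop :=
  w.Chain' (fun a b => b ≠ a.inv)

/-- The boundary of the tree: semi-infinite reduced words. -/
def Boundary (s t : ℕ) : Type := {ω : ℕ → Letter s t // ∀ k, ω (k + 1) ≠ (ω k).inv}

/-- The cylinder set of boundary points beginning with the word `x`. -/
def cyl {s t : ℕ} (x : List (Letter s t)) : Set (Boundary s t) :=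
  {ω | ∀ i, (h : i < x.length) → ω.1 i = x.get ⟨i, h⟩}

/-- The Borel σ-algebra on the boundary, generated by the (nontrivial) cylinder sets. -/
instance {s t : ℕ} : MeasurableSpace (Boundary s t) :=
  MeasurableSpace.generateFrom
    {S | ∃ x : List (Letter s t), RedWord x ∧ x ≠ [] ∧ S = cyl x}

/-- The shift, deleting the first letter of a boundary word. -/
def shift {s t : ℕ} (ω : Boundary s t) : Boundary s t :=
  ⟨fun k => ω.1 (k + 1), fun k => ω.2 (k + 1)⟩

/-- Left multiplication of a boundary word by a single letter, with cancellation. -/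
def prepend {s t : ℕ} (a : Letter s t) (ω : Boundary s t) : Boundary s t :=
  if h : ω.1 0 = a.inv then shift ω
  else ⟨fun k => match k with
        | 0 => a
        | k + 1 => ω.1 k,
      by
        intro k
        match k with
        | 0 => simpa using h
        | k + 1 => exact ω.2 k⟩

/-- The action of a word `w ∈ Γ` on the boundary by left multiplication and reduction. -/
def act {s t : ℕ} (w : List (Letter s t)) (ω : Boundary s t) : Boundary s t :=
  w.foldr prepend ω

/-- The reduced word representing the inverse group element. -/
def invWord {s t : ℕ} (w : List (Letter s t)) : List (Letter s t) :=
  (w.reverse).map Letter.inv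


/-! The exchange `k` replaces the prefix of length `|x|` by its image under the transposition
`(x y)` of words (so it fixes everything outside `Ω^x ∪ Ω^y`) and transports the tail along the
tree isomorphism between the subtrees below the old and the new prefix: past the prefix, letter
`i + 1` is moved by the transposition of the inverses of the old and the new letter `i`.

This `k` is an involution, and the first `L ≥ |x|` letters of `k ω` depend only on those of `ω`,
so `k` maps cylinders of length `L` onto cylinders of length `L`; as `ν` gives equal mass to
cylinders of equal length, `k` preserves `ν`. Once a letter of `k ω` agrees with the letter of
`ω`, all later letters agree, so `k ω` and `ω` differ by a finite word and lie in one orbit. The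
points that never synchronize are determined by their first `|x|` letters, hence countable, and
`ν` has no atoms since `ν (Ω^z) → 0` as `|z| → ∞`. -/
open Function

section Letters

variable {s t : ℕ}

@[simp] lemma Letter.inv_inv (a : Letter s t) : a.inv.inv = a := by
  rcases a with i | ⟨j, b⟩ <;> simp [Letter.inv]

lemma RedWord.getElem_succ_ne {w : List (Letter s t)} (hw : RedWord w) {i : ℕ}
    (h : i + 1 < w.length) : w[i + 1] ≠ w[i].inv :=
  List.isChain_iff_getElem.mp hw i h

end Letters

section Relabel

variable {s t : ℕ} {p q : List (Letter s t)} {ω ω' : ℕ → Letter s t}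

def relabel (p : List (Letter s t)) (ω : ℕ → Letter s t) : ℕ → Letter s t
  | 0 => p.getD 0 (ω 0)
  | k + 1 => p.getD (k + 1) (Equiv.swap (ω k).inv (relabel p ω k).inv (ω (k + 1)))

lemma relabel_of_lt {i : ℕ} (h : i < p.length) : relabel p ω i = p[i] := by
  cases i <;> simp only [relabel, List.getD_eq_getElem _ _ h]

lemma relabel_zero_of_eq_nil (hp : p = []) : relabel p ω 0 = ω 0 := by
  subst hp; rfl

lemma relabel_succ_of_le {k : ℕ} (h : p.length ≤ k + 1) :
    relabel p ω (k + 1) = Equiv.swap (ω k).inv (relabel p ω k).inv (ω (k + 1)) :=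
  List.getD_eq_default _ _ h

lemma relabel_succ_ne (hp : RedWord p) (hω : ∀ k, ω (k + 1) ≠ (ω k).inv) (k : ℕ) :
    relabel p ω (k + 1) ≠ (relabel p ω k).inv := by
  rcases lt_or_ge (k + 1) p.length with h | h
  · rw [relabel_of_lt h, relabel_of_lt (by omega)]
    exact hp.getElem_succ_ne h
  · have := (Equiv.swap (ω k).inv (relabel p ω k).inv).injective.ne (hω k)
    rwa [Equiv.swap_apply_left, ← relabel_succ_of_le h] at this

lemma relabel_congr {k : ℕ} (h : ∀ i ≤ k, ω i = ω' i) :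
    relabel p ω k = relabel p ω' k := by
  induction k with
  | zero => simp only [relabel, h 0 le_rfl]
  | succ k ih =>
    simp only [relabel, h k (by omega), h (k + 1) le_rfl, ih fun i hi => h i (by omega)]

lemma relabel_eq_self (h : ∀ i (hi : i < p.length), ω i = p[i]) : relabel p ω = ω := by
  funext i
  induction i with
  | zero =>
    rcases Nat.eq_zero_or_pos p.length with hp | hp
    · exact relabel_zero_of_eq_nil (List.eq_nil_of_length_eq_zero hp)
    · rw [relabel_of_lt hp, h 0 hp]
  | succ k ih =>
    rcases lt_or_ge (k + 1) p.length with hk | hk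
    · rw [relabel_of_lt hk, h _ hk]
    · rw [relabel_succ_of_le hk, ih, Equiv.swap_self, Equiv.refl_apply]

lemma relabel_relabel (hpq : p.length = q.length) (h : ∀ i (hi : i < q.length), ω i = q[i]) :
    relabel q (relabel p ω) = ω := by
  funext i
  induction i with
  | zero =>
    rcases Nat.eq_zero_or_pos q.length with hq | hq
    · rw [relabel_zero_of_eq_nil (List.eq_nil_of_length_eq_zero hq),
        relabel_zero_of_eq_nil (List.eq_nil_of_length_eq_zero (hpq.trans hq))]
    · rw [relabel_of_lt hq, h 0 hq]
  | succ k ih =>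
    rcases lt_or_ge (k + 1) q.length with hk | hk
    · rw [relabel_of_lt hk, h _ hk]
    · rw [relabel_succ_of_le hk, ih, relabel_succ_of_le (hpq ▸ hk), Equiv.swap_comm,
        Equiv.swap_apply_self]

lemma relabel_eq_of_eq {j : ℕ} (hj : p.length ≤ j + 1) (h : relabel p ω j = ω j) :
    ∀ i, j ≤ i → relabel p ω i = ω i := by
  intro i hi
  induction i, hi using Nat.le_induction with
  | base => exact h
  | succ i hji ih => rw [relabel_succ_of_le (by omega), ih, Equiv.swap_self, Equiv.refl_apply]

lemma eq_inv_relabel_of_relabel_ne {k : ℕ} (hk : p.length ≤ k + 1)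
    (hω : ω (k + 1) ≠ (ω k).inv) (h : relabel p ω (k + 1) ≠ ω (k + 1)) :
    ω (k + 1) = (relabel p ω k).inv := by
  by_contra hne
  exact h (by rw [relabel_succ_of_le hk]; exact Equiv.swap_apply_of_ne_of_ne hω hne)

-- Past the prefix, each letter of a never-synchronizing sequence is forced to be the inverse
-- of the previous relabelled letter.
lemma eq_of_forall_relabel_ne (hω : ∀ k, ω (k + 1) ≠ (ω k).inv)
    (hω' : ∀ k, ω' (k + 1) ≠ (ω' k).inv)
    (hne : ∀ j, p.length ≤ j → relabel p ω j ≠ ω j)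
    (hne' : ∀ j, p.length ≤ j → relabel p ω' j ≠ ω' j)
    (h : ∀ i < p.length, ω i = ω' i) : ω = ω' := by
  funext j
  induction j using Nat.strong_induction_on with
  | _ j ih =>
    rcases lt_or_ge j p.length with hj | hj
    · exact h j hj
    cases j with
    | zero => exact absurd (relabel_zero_of_eq_nil (List.eq_nil_of_length_eq_zero
        (Nat.le_zero.mp hj))) (hne 0 hj)
    | succ k =>
      rw [eq_inv_relabel_of_relabel_ne hj (hω k) (hne _ hj),
        eq_inv_relabel_of_relabel_ne hj (hω' k) (hne' _ hj),
        relabel_congr fun i hi => ih i (by omega)]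

end Relabel

section Cylinders

variable {s t : ℕ}

def Boundary.take (L : ℕ) (ω : Boundary s t) : List (Letter s t) :=
  List.ofFn fun i : Fin L => ω.1 i

namespace Boundary

variable {ω ω' : Boundary s t} {K L : ℕ}

@[simp] lemma length_take : (ω.take L).length = L := List.length_ofFn

@[simp] lemma getElem_take {i : ℕ} (h : i < (ω.take L).length) : (ω.take L)[i] = ω.1 i :=
  List.getElem_ofFn h

lemma take_eq_take_iff : ω.take L = ω'.take L ↔ ∀ i < L, ω.1 i = ω'.1 i := by
  simp [take, List.ofFn_inj, funext_iff, Fin.forall_iff]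

lemma take_take (h : K ≤ L) : (ω.take L).take K = ω.take K :=
  List.ext_getElem (by simp [h]) fun i _ _ => by simp

lemma redWord_take : RedWord (ω.take L) :=
  List.isChain_iff_getElem.mpr fun i _ => by simpa using ω.2 i

end Boundary

lemma mem_cyl_iff {z : List (Letter s t)} {ω : Boundary s t} :
    ω ∈ cyl z ↔ ω.take z.length = z := by
  simp [cyl, List.ext_getElem_iff, eq_comm]

lemma mem_cyl_take (ω : Boundary s t) (L : ℕ) : ω ∈ cyl (ω.take L) := by
  rw [mem_cyl_iff, Boundary.length_take]

lemma cyl_take_subset {z : List (Letter s t)} {ω : Boundary s t} (hω : ω ∈ cyl z) {L : ℕ}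
    (hL : z.length ≤ L) : cyl (ω.take L) ⊆ cyl z := by
  intro ω' hω'
  rw [mem_cyl_iff, Boundary.length_take] at hω'
  rw [mem_cyl_iff, ← Boundary.take_take hL, hω', Boundary.take_take hL, ← mem_cyl_iff]
  exact hω

lemma cyl_eq_biUnion_take {z : List (Letter s t)} {L : ℕ} (hL : z.length ≤ L) :
    cyl z = ⋃ w ∈ Boundary.take L '' cyl z, cyl w := by
  refine subset_antisymm (fun ω hω => Set.mem_biUnion (Set.mem_image_of_mem _ hω)
    (mem_cyl_take ω L)) ?_
  simp only [Set.iUnion_subset_iff, Set.forall_mem_image]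
  exact fun ω hω => cyl_take_subset hω hL

lemma pairwiseDisjoint_cyl (L : ℕ) :
    {w : List (Letter s t) | w.length = L}.PairwiseDisjoint cyl := by
  intro z hz w hw hzw
  refine Set.disjoint_left.mpr fun ω hωz hωw => hzw ?_
  rw [mem_cyl_iff] at hωz hωw
  rw [← hωz, ← hωw, hz, show w.length = L from hw]

lemma measurableSet_cyl (z : List (Letter s t)) : MeasurableSet (cyl z) := by
  rcases eq_or_ne z [] with rfl | hz
  · convert MeasurableSet.univ
    exact Set.eq_univ_of_forall fun ω i h => absurd h (Nat.not_lt_zero i)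
  rcases (cyl z).eq_empty_or_nonempty with he | ⟨ω, hω⟩
  · rw [he]; exact .empty
  · refine MeasurableSpace.measurableSet_generateFrom ⟨z, ?_, hz, rfl⟩
    rw [← mem_cyl_iff.mp hω]
    exact Boundary.redWord_take

lemma isPiSystem_cyl :
    IsPiSystem {S : Set (Boundary s t) | ∃ z, RedWord z ∧ z ≠ [] ∧ S = cyl z} := by
  rintro _ ⟨z, hz, hz0, rfl⟩ _ ⟨w, hw, hw0, rfl⟩ ⟨ω, hωz, hωw⟩
  rcases le_total z.length w.length with h | h
  · rw [Set.inter_eq_self_of_subset_right]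
    · exact ⟨w, hw, hw0, rfl⟩
    · rw [← mem_cyl_iff.mp hωw]; exact cyl_take_subset hωz h
  · rw [Set.inter_eq_self_of_subset_left]
    · exact ⟨z, hz, hz0, rfl⟩
    · rw [← mem_cyl_iff.mp hωz]; exact cyl_take_subset hωw h

end Cylinders

section PrefixLocal

variable {s t : ℕ}

def PrefixLocal (m : ℕ) (f : Boundary s t → Boundary s t) : Prop :=
  ∀ L, m ≤ L → ∀ ω ω' : Boundary s t,
    ω.take L = ω'.take L → (f ω).take L = (f ω').take L

namespace PrefixLocal

variable {m : ℕ} {f : Boundary s t → Boundary s t}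

lemma preimage_cyl_take (hf : PrefixLocal m f) (hinv : Involutive f) {L : ℕ} (hL : m ≤ L)
    (ω₀ : Boundary s t) :
    f ⁻¹' cyl (ω₀.take L) = cyl ((f ω₀).take L) := by
  ext ω
  simp only [Set.mem_preimage, mem_cyl_iff, Boundary.length_take]
  constructor <;> intro h <;> simpa only [hinv _] using hf L hL _ _ h

lemma measurable (hf : PrefixLocal m f) (hinv : Involutive f) : Measurable f := by
  refine measurable_generateFrom fun _ ⟨z, _, _, hS⟩ => ?_
  rw [hS, cyl_eq_biUnion_take (le_max_left z.length m), Set.preimage_iUnion₂]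
  refine .biUnion (Set.to_countable _) ?_
  rintro _ ⟨ω, -, rfl⟩
  rw [hf.preimage_cyl_take hinv (le_max_right _ _)]
  exact measurableSet_cyl _

lemma measure_preimage_cyl (hf : PrefixLocal m f) (hinv : Involutive f)
    {ν : Measure (Boundary s t)}
    (huniform : ∀ z w, RedWord z → RedWord w → z.length = w.length →
      ν (cyl z) = ν (cyl w))
    (z : List (Letter s t)) : ν (f ⁻¹' cyl z) = ν (cyl z) := by
  set L := max z.length m
  set W := Boundary.take L '' cyl z
  have hW : W.PairwiseDisjoint cyl := (pairwiseDisjoint_cyl L).subset <| by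
    rintro _ ⟨ω, -, rfl⟩
    exact Boundary.length_take
  rw [cyl_eq_biUnion_take (le_max_left z.length m), Set.preimage_iUnion₂,
    measure_biUnion (Set.to_countable W) (fun v hv w hw hvw => (hW hv hw hvw).preimage f)
      fun w _ => hf.measurable hinv (measurableSet_cyl w),
    measure_biUnion (Set.to_countable W) hW fun w _ => measurableSet_cyl w]
  refine tsum_congr ?_
  rintro ⟨_, ω, -, rfl⟩
  rw [hf.preimage_cyl_take hinv (le_max_right _ _)]
  exact huniform _ _ Boundary.redWord_take Boundary.redWord_take
    (by rw [Boundary.length_take, Boundary.length_take])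

lemma measurePreserving (hf : PrefixLocal m f) (hinv : Involutive f)
    {ν : Measure (Boundary s t)} [IsFiniteMeasure ν]
    (huniform : ∀ z w, RedWord z → RedWord w → z.length = w.length →
      ν (cyl z) = ν (cyl w)) :
    MeasurePreserving f ν ν := by
  have hmeas := hf.measurable hinv
  refine ⟨hmeas, ext_of_generate_finite _ rfl isPiSystem_cyl ?_ ?_⟩
  · rintro _ ⟨z, -, -, rfl⟩
    rw [Measure.map_apply hmeas (measurableSet_cyl z)]
    exact hf.measure_preimage_cyl hinv huniform z
  · rw [Measure.map_apply hmeas .univ, Set.preimage_univ]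

end PrefixLocal

end PrefixLocal

section Action

variable {s t : ℕ}

lemma shift_iterate_val (N : ℕ) (ω : Boundary s t) (i : ℕ) :
    (shift^[N] ω).1 i = ω.1 (N + i) := by
  induction N generalizing ω with
  | zero => simp
  | succ N ih =>
    rw [iterate_succ_apply, ih]
    exact congrArg ω.1 (by omega)

lemma prepend_val_zero_shift (ω : Boundary s t) : prepend (ω.1 0) (shift ω) = ω := by
  refine (dif_neg (ω.2 0)).trans (Subtype.ext (funext fun k => ?_))
  cases k <;> rfl

lemma prepend_inv_prepend (a : Letter s t) (ω : Boundary s t) :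
    prepend a.inv (prepend a ω) = ω := by
  by_cases h : ω.1 0 = a.inv
  · rw [show prepend a ω = shift ω from dif_pos h, ← h]
    exact prepend_val_zero_shift ω
  · have hhead : (prepend a ω).1 0 = a.inv.inv := by simp [prepend, h]
    refine (dif_pos hhead).trans ?_
    exact Subtype.ext (funext fun k => by simp [shift, prepend, h])

lemma act_append (l₁ l₂ : List (Letter s t)) (ω : Boundary s t) :
    act (l₁ ++ l₂) ω = act l₁ (act l₂ ω) :=
  List.foldr_append

lemma act_take_shift_iterate (N : ℕ) (ω : Boundary s t) :
    act (ω.take N) (shift^[N] ω) = ω := by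
  induction N generalizing ω with
  | zero => rfl
  | succ N ih =>
    have htake : ω.take (N + 1) = ω.1 0 :: (shift ω).take N := List.ofFn_succ
    rw [htake, iterate_succ_apply]
    exact (congrArg (prepend (ω.1 0)) (ih (shift ω))).trans (prepend_val_zero_shift ω)

lemma act_invWord_act (w : List (Letter s t)) (ω : Boundary s t) :
    act (invWord w) (act w ω) = ω := by
  induction w with
  | nil => rfl
  | cons a w ih =>
    rw [invWord, List.reverse_cons, List.map_append, act_append]
    exact (congrArg (act _) (prepend_inv_prepend a (act w ω))).trans ih

lemma exists_redWord_act_eq (w : List (Letter s t)) : ∃ g, RedWord g ∧ act g = act w := by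
  induction w with
  | nil => exact ⟨[], List.isChain_nil, rfl⟩
  | cons a w ih =>
    obtain ⟨g, hg, hgw⟩ := ih
    have hcons : prepend a ∘ act g = act (a :: w) := by rw [hgw]; rfl
    cases g with
    | nil => exact ⟨[a], List.isChain_singleton a, hcons⟩
    | cons b g =>
      by_cases hb : b = a.inv
      · refine ⟨g, hg.tail, funext fun ω => ?_⟩
        rw [← hcons, comp_apply, hb]
        have := prepend_inv_prepend a.inv (act g ω)
        rw [Letter.inv_inv] at this
        exact this.symm
      · exact ⟨a :: b :: g, List.isChain_cons_cons.mpr ⟨hb, hg⟩, hcons⟩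

lemma exists_act_of_eventually_eq {τ ω : Boundary s t} {N : ℕ}
    (h : ∀ i, N ≤ i → τ.1 i = ω.1 i) :
    ∃ g, RedWord g ∧ τ = act g ω := by
  have hshift : shift^[N] τ = shift^[N] ω :=
    Subtype.ext (funext fun i => by simp only [shift_iterate_val]; exact h _ (by omega))
  obtain ⟨g, hg, hgw⟩ := exists_redWord_act_eq (τ.take N ++ invWord (ω.take N))
  refine ⟨g, hg, ?_⟩
  calc τ = act (τ.take N) (shift^[N] ω) := by rw [← hshift, act_take_shift_iterate]
    _ = act (τ.take N) (act (invWord (ω.take N)) ω) := by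
      rw [← act_invWord_act (ω.take N) (shift^[N] ω), act_take_shift_iterate]
    _ = act g ω := by rw [hgw, act_append]

end Action

section Exchange

variable {s t : ℕ} {x y : List (Letter s t)}

lemma RedWord.swap (hx : RedWord x) (hy : RedWord y) {w : List (Letter s t)} (hw : RedWord w) :
    RedWord (Equiv.swap x y w) := by
  rw [Equiv.swap_apply_def]
  split_ifs <;> assumption

def exchange (hx : RedWord x) (hy : RedWord y) (ω : Boundary s t) : Boundary s t :=
  ⟨relabel (Equiv.swap x y (ω.take x.length)) ω.1,
    relabel_succ_ne (hx.swap hy Boundary.redWord_take) ω.2⟩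

variable (hx : RedWord x) (hy : RedWord y)

lemma exchange_prefixLocal : PrefixLocal x.length (exchange hx hy) := by
  intro L hL ω ω' h
  rw [Boundary.take_eq_take_iff] at h ⊢
  have hprefix : ω.take x.length = ω'.take x.length :=
    Boundary.take_eq_take_iff.mpr fun i hi => h i (by omega)
  intro i hi
  change relabel _ ω.1 i = relabel _ ω'.1 i
  rw [hprefix]
  exact relabel_congr fun j hj => h j (by omega)

lemma length_swap_take (hlen : x.length = y.length) (ω : Boundary s t) :
    (Equiv.swap x y (ω.take x.length)).length = x.length := by
  rw [Equiv.swap_apply_def]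
  split_ifs <;> simp [hlen]

lemma take_exchange (hlen : x.length = y.length) (ω : Boundary s t) :
    (exchange hx hy ω).take x.length = Equiv.swap x y (ω.take x.length) :=
  List.ext_getElem (by rw [Boundary.length_take, length_swap_take hlen]) fun i hi _ => by
    rw [Boundary.getElem_take]
    exact relabel_of_lt (by rw [length_swap_take hlen]; simpa using hi)

lemma exchange_involutive (hlen : x.length = y.length) : Involutive (exchange hx hy) := by
  intro ω
  refine Subtype.ext ?_
  change relabel (Equiv.swap x y ((exchange hx hy ω).take x.length))
    (relabel (Equiv.swap x y (ω.take x.length)) ω.1) = ω.1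
  rw [take_exchange hx hy hlen, Equiv.swap_apply_self]
  exact relabel_relabel (by rw [length_swap_take hlen, Boundary.length_take]) fun i _ => by simp

lemma exchange_eq_self (hlen : x.length = y.length) {ω : Boundary s t}
    (h : ω ∉ cyl x ∪ cyl y) : exchange hx hy ω = ω := by
  rw [Set.mem_union, not_or, mem_cyl_iff, mem_cyl_iff, ← hlen] at h
  refine Subtype.ext ?_
  change relabel (Equiv.swap x y (ω.take x.length)) ω.1 = ω.1
  rw [Equiv.swap_apply_of_ne_of_ne h.1 h.2]
  exact relabel_eq_self fun i _ => by simp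

lemma image_exchange_cyl (hlen : x.length = y.length) : exchange hx hy '' cyl x = cyl y := by
  have hinv := exchange_involutive hx hy hlen
  rw [Set.image_eq_preimage_of_inverse hinv.leftInverse hinv.rightInverse]
  ext ω
  rw [Set.mem_preimage, mem_cyl_iff, mem_cyl_iff, take_exchange hx hy hlen, ← hlen,
    Equiv.swap_apply_eq_iff, Equiv.swap_apply_left]

lemma exists_act_of_exchange_eq (hlen : x.length = y.length) {ω : Boundary s t} {j : ℕ}
    (hj : x.length ≤ j) (h : (exchange hx hy ω).1 j = ω.1 j) :
    ∃ g, RedWord g ∧ exchange hx hy ω = act g ω :=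
  exists_act_of_eventually_eq (relabel_eq_of_eq (by rw [length_swap_take hlen]; omega) h)

lemma countable_exchange_ne (hlen : x.length = y.length) :
    {ω : Boundary s t | ∀ j, x.length ≤ j → (exchange hx hy ω).1 j ≠ ω.1 j}.Countable := by
  refine (Set.mapsTo_univ (Boundary.take x.length) _).countable_of_injOn ?_ Set.countable_univ
  intro ω hω ω' hω' h
  have hp := length_swap_take hlen ω
  refine Subtype.ext (eq_of_forall_relabel_ne ω.2 ω'.2 (fun j hj => hω j (hp ▸ hj))
    (fun j hj => ?_) fun i hi => Boundary.take_eq_take_iff.mp h i (hp ▸ hi))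
  rw [h] at hj ⊢
  exact hω' j (length_swap_take hlen ω' ▸ hj)

end Exchange

lemma measure_cyl_eq_of_length_eq {s t : ℕ} {ν : Measure (Boundary s t)} {c : ℕ → ℝ≥0∞}
    (hν : ∀ z : List (Letter s t), RedWord z → z ≠ [] → ν (cyl z) = c z.length)
    (z w : List (Letter s t)) (hz : RedWord z) (hw : RedWord w) (h : z.length = w.length) :
    ν (cyl z) = ν (cyl w) := by
  rcases eq_or_ne z [] with rfl | hz0
  · rw [List.eq_nil_of_length_eq_zero h.symm]
  · have hw0 : w ≠ [] := fun hw0 => hz0 (List.eq_nil_of_length_eq_zero (by simp [h, hw0]))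
    rw [hν z hz hz0, hν w hw hw0, h]

lemma nullSingletonClass_of_measure_cyl {s t n : ℕ} (hn : 2 ≤ n) {ν : Measure (Boundary s t)}
    (hν : ∀ z : List (Letter s t), RedWord z → z ≠ [] →
      ν (cyl z) = (1 / (n + 1) : ℝ≥0∞) * (1 / n) ^ (z.length - 1)) :
    NullSingletonClass ν := by
  have hlt : (1 / n : ℝ≥0∞) < 1 := by
    rw [one_div, ENNReal.inv_lt_one]
    exact_mod_cast hn
  refine ⟨fun ω => le_antisymm
    (ge_of_tendsto' (ENNReal.tendsto_pow_atTop_nhds_zero_of_lt_one hlt) fun L => ?_) bot_le⟩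
  have hne : ω.take (L + 1) ≠ [] := List.ne_nil_of_length_pos (by simp)
  calc ν {ω} ≤ ν (cyl (ω.take (L + 1))) :=
        measure_mono (Set.singleton_subset_iff.mpr (mem_cyl_take ω _))
    _ = (1 / (n + 1) : ℝ≥0∞) * (1 / n) ^ L := by
        rw [hν _ Boundary.redWord_take hne, Boundary.length_take, Nat.add_sub_cancel]
    _ ≤ (1 / n) ^ L := mul_le_of_le_one_left' (by simp)

theorem exists_fullGroup_cylinder_exchange_general (s t n m : ℕ) (hn : 2 ≤ n)
    (ν : Measure (Boundary s t)) [IsProbabilityMeasure ν]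
    (hν : ∀ z : List (Letter s t), RedWord z → z ≠ [] →
      ν (cyl z) = (1 / (n + 1) : ℝ≥0∞) * (1 / n) ^ (z.length - 1))
    (x y : List (Letter s t)) (hx : RedWord x) (hy : RedWord y)
    (hxl : x.length = m) (hyl : y.length = m) :
    ∃ k : Equiv.Perm (Boundary s t),
      Measurable ⇑k ∧ Measurable ⇑k.symm ∧
      (∀ A : Set (Boundary s t), MeasurableSet A → ν (⇑k ⁻¹' A) = ν A) ∧
      ν (symmDiff (⇑k '' cyl x) (cyl y)) = 0 ∧
      (∀ ω ∉ cyl x ∪ cyl y, k ω = ω) ∧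
      (∀ᵐ ω ∂ν, ∃ g : List (Letter s t), RedWord g ∧ k ω = act g ω) := by
  have hlen : x.length = y.length := hxl.trans hyl.symm
  have hinv := exchange_involutive hx hy hlen
  have hmp : MeasurePreserving (exchange hx hy) ν ν :=
    (exchange_prefixLocal hx hy).measurePreserving hinv
      (measure_cyl_eq_of_length_eq
        (c := fun L => (1 / (n + 1) : ℝ≥0∞) * (1 / n) ^ (L - 1)) hν)
  have := nullSingletonClass_of_measure_cyl hn hν
  have hsync :=
    measure_eq_zero_iff_ae_notMem.mp ((countable_exchange_ne hx hy hlen).measure_zero ν)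
  refine ⟨hinv.toPerm, hmp.measurable, hmp.measurable,
    fun A hA => hmp.measure_preimage hA.nullMeasurableSet, ?_,
    fun ω hω => exchange_eq_self hx hy hlen hω, hsync.mono fun ω hω => ?_⟩
  · rw [hinv.coe_toPerm, image_exchange_cyl hx hy hlen, symmDiff_self, Set.bot_eq_empty,
      measure_empty]
  · simp only [Set.mem_ofPred_eq, not_forall, not_not] at hω
    obtain ⟨j, hj, h⟩ := hω
    exact exists_act_of_exchange_eq hx hy hlen hj h

/-- For any two reduced words `x, y ∈ Γ` of the same length `m ≥ 1`,
there exists a measure-preserving Borel automorphism `k` of `(Ω, ν)` mapping `Ω^x`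
bijectively onto `Ω^y` up to a null set, equal to the identity off `Ω^x ∪ Ω^y`, and
with `kω ∈ Γω` for `ν`-a.e. `ω`; i.e. `k` lies in the measure-preserving full group
`[Γ]₀`. -/
theorem exists_fullGroup_cylinder_exchange (s t n m : ℕ) (hn : 2 ≤ n)
    (hst : s + 2 * t = n + 1) (hm : 1 ≤ m)
    (ν : Measure (Boundary s t)) [IsProbabilityMeasure ν]
    (hν : ∀ z : List (Letter s t), RedWord z → z ≠ [] →
      ν (cyl z) = (1 / (n + 1) : ℝ≥0∞) * (1 / n) ^ (z.length - 1))
    (x y : List (Letter s t)) (hx : RedWord x) (hy : RedWord y)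
    (hxl : x.length = m) (hyl : y.length = m) :
    ∃ k : Equiv.Perm (Boundary s t),
      Measurable ⇑k ∧ Measurable ⇑k.symm ∧
      (∀ A : Set (Boundary s t), MeasurableSet A → ν (⇑k ⁻¹' A) = ν A) ∧
      ν (symmDiff (⇑k '' cyl x) (cyl y)) = 0 ∧
      (∀ ω ∉ cyl x ∪ cyl y, k ω = ω) ∧
      (∀ᵐ ω ∂ν, ∃ g : List (Letter s t), RedWord g ∧ k ω = act g ω) :=
  exists_fullGroup_cylinder_exchange_general s t n m hn ν hν x y hx hy hxl hyl
end
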